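/- arXiv:1805.01056 — 2 statements merged into one kernel-verified Lean document; each statement's English description precedes it below -/
import Mathlib

section
/- Let k ≥ 2 be an integer. For every real number θ with 0 ≤ θ < 2√(k−1), there exist an integer t ≥ 4 and a real number c > 0 such that θ is the largest real zero of the polynomial (c−1)·G_{t−4} + G_{t−2} (equivalently, θ is the second largest eigenvalue of the matrix B(k,t,c)). -/
open Polynomial Matrix

/-- The orthogonal polynomials `F_i` defined by `F_0 = 1`, `F_1 = x`, `F_2 = x^2 - k`,
and `F_i = x F_{i-1} - (k-1) F_{i-2}` for `i ≥ 3`. -/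
noncomputable def Fpoly (k : ℝ) : ℕ → Polynomial ℝ
  | 0 => 1
  | 1 => X
  | 2 => X ^ 2 - C k
  | (n + 3) => X * Fpoly k (n + 2) - C (k - 1) * Fpoly k (n + 1)

/-- `G_i = ∑_{j=0}^{⌊i/2⌋} F_{i-2j}`. -/
noncomputable def Gpoly (k : ℝ) (i : ℕ) : Polynomial ℝ :=
  ∑ j ∈ Finset.range (i / 2 + 1), Fpoly k (i - 2 * j)

/-! With `q = √(k - 1)` the `G_n` are rescaled Chebyshev polynomials of the second kind:
`G_n(2q cos ψ) sin ψ = qⁿ sin((n + 1)ψ)`. Write `θ = 2q cos φ` with `φ ∈ (0, π/2]` and choose `n`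
with `(n + 1)φ < π ≤ (n + 2)φ`. At `x = 2q cos ψ` the combination `(c - 1) G_n + G_{n+2}` has the
sign of `(c - 1) sin((n + 1)ψ) + q² sin((n + 3)ψ)`; fix `c` so that this vanishes at `ψ = φ`, which
forces `c ≥ 1` since `(n + 3)φ ∈ (π, 2π]`. Because `sin((n + 3)ψ) / sin((n + 1)ψ)` is strictly
decreasing on `(0, φ]`, there is no zero in `(θ, 2q)`, and on `[2q, ∞)` every `G_m` is at least
`qᵐ > 0`. Then `t = n + 4`. -/

open Real Set

theorem Gpoly_add_two_eq_Fpoly_add (k : ℝ) (n : ℕ) :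
    Gpoly k (n + 2) = Fpoly k (n + 2) + Gpoly k n := by
  unfold Gpoly
  rw [show (n + 2) / 2 + 1 = n / 2 + 1 + 1 by omega, Finset.sum_range_succ', add_comm]
  congr 1
  exact Finset.sum_congr rfl fun j _ => congrArg _ (by omega)

theorem Gpoly_add_two (k : ℝ) :
    ∀ n, Gpoly k (n + 2) = X * Gpoly k (n + 1) - C (k - 1) * Gpoly k n
  | 0 => by
    simp [Gpoly, Fpoly, Finset.sum_range_succ]
    ring
  | 1 => by
    simp [Gpoly, Fpoly, Finset.sum_range_succ]
    ring
  | n + 2 => by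
    have hF : Fpoly k (n + 4) = X * Fpoly k (n + 3) - C (k - 1) * Fpoly k (n + 2) := rfl
    linear_combination Gpoly_add_two_eq_Fpoly_add k (n + 2)
      - X * Gpoly_add_two_eq_Fpoly_add k (n + 1) + C (k - 1) * Gpoly_add_two_eq_Fpoly_add k n
      + hF + Gpoly_add_two k n

theorem Gpoly_eval_cos_mul_sin {k q : ℝ} (hq : q ^ 2 = k - 1) (ψ : ℝ) :
    ∀ n : ℕ, (Gpoly k n).eval (2 * q * cos ψ) * sin ψ = q ^ n * sin ((n + 1) * ψ)
  | 0 => by simp [Gpoly, Fpoly]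
  | 1 => by
    simp [Gpoly, Fpoly, one_add_one_eq_two, sin_two_mul]
    ring
  | n + 2 => by
    have hsin : sin ((n + 3) * ψ) + sin ((n + 1) * ψ) = 2 * cos ψ * sin ((n + 2) * ψ) := by
      rw [show (n + 3) * ψ = (n + 2) * ψ + ψ by ring, show (n + 1) * ψ = (n + 2) * ψ - ψ by ring,
        sin_add, sin_sub]
      ring
    have h1 := Gpoly_eval_cos_mul_sin hq ψ (n + 1)
    have h0 := Gpoly_eval_cos_mul_sin hq ψ n
    rw [Gpoly_add_two]
    simp only [eval_sub, eval_mul, eval_X, eval_C]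
    push_cast at h1 ⊢
    linear_combination (norm := ring_nf) (2 * q * cos ψ) * h1 - (k - 1) * h0 - q ^ (n + 2) * hsin
      + q ^ n * sin ((n + 1) * ψ) * hq

theorem pow_le_eval_Gpoly {k q x : ℝ} (hq : q ^ 2 = k - 1) (hq0 : 0 ≤ q) (hx : 2 * q ≤ x)
    (n : ℕ) : q ^ n ≤ (Gpoly k n).eval x := by
  suffices ∀ n, q ^ n ≤ (Gpoly k n).eval x ∧ q * (Gpoly k n).eval x ≤ (Gpoly k (n + 1)).eval x
    from (this n).1
  intro n
  induction n with
  | zero => simp [Gpoly, Fpoly]; linarith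
  | succ n ih =>
    have hpow : q ^ (n + 1) ≤ (Gpoly k (n + 1)).eval x := by
      rw [pow_succ']; exact (mul_le_mul_of_nonneg_left ih.1 hq0).trans ih.2
    refine ⟨hpow, ?_⟩
    rw [Gpoly_add_two, ← hq]
    simp only [eval_sub, eval_mul, eval_X, eval_C]
    have hG : 0 ≤ (Gpoly k (n + 1)).eval x := (pow_nonneg hq0 _).trans hpow
    linarith [mul_le_mul_of_nonneg_right hx hG, mul_le_mul_of_nonneg_left ih.2 hq0]

theorem abs_sin_add_le (x y : ℝ) : |sin (x + y)| ≤ |sin x| + |sin y| := by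
  rw [sin_add]
  calc |sin x * cos y + cos x * sin y| ≤ |sin x| * |cos y| + |cos x| * |sin y| := by
        simpa only [abs_mul] using abs_add_le (sin x * cos y) (cos x * sin y)
    _ ≤ |sin x| * 1 + 1 * |sin y| := by
        gcongr
        · exact abs_cos_le_one _
        · exact abs_cos_le_one _
    _ = |sin x| + |sin y| := by ring

theorem abs_sin_nat_mul_lt {α : ℝ} (h0 : 0 < α) (hπ : α < π) {N : ℕ} (hN : 2 ≤ N) :
    |sin (N * α)| < N * sin α := by
  have hsin : 0 < sin α := sin_pos_of_pos_of_lt_pi h0 hπ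
  induction N, hN using Nat.le_induction with
  | base =>
    have hcos : |cos α| < 1 := by
      rw [← sq_lt_one_iff_abs_lt_one]; nlinarith [sin_sq_add_cos_sq α]
    rw [Nat.cast_two, sin_two_mul, abs_mul, abs_mul, abs_of_pos hsin, abs_two]
    nlinarith
  | succ N _ ih =>
    push_cast
    rw [add_one_mul]
    calc |sin (N * α + α)| ≤ |sin (N * α)| + |sin α| := abs_sin_add_le _ _
      _ < N * sin α + sin α := by rw [abs_of_pos hsin]; linarith
      _ = (N + 1) * sin α := by ring

theorem sin_div_sin_deriv_numerator_eq (n : ℕ) (x : ℝ) :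
    (n + 3) * cos ((n + 3) * x) * sin ((n + 1) * x)
        - (n + 1) * sin ((n + 3) * x) * cos ((n + 1) * x)
      = sin ((n + 2 : ℕ) * (2 * x)) - (n + 2 : ℕ) * sin (2 * x) := by
  have hsub : 2 * x = (n + 3) * x - (n + 1) * x := by ring
  have hadd : (n + 2 : ℕ) * (2 * x) = (n + 3) * x + (n + 1) * x := by push_cast; ring
  rw [hadd, hsub, sin_add, sin_sub]
  push_cast
  ring

theorem strictAntiOn_sin_div_sin (n : ℕ) {b : ℝ} (hb : b ≤ π / 2) (hnb : (n + 1) * b < π) :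
    StrictAntiOn (fun x => sin ((n + 3) * x) / sin ((n + 1) * x)) (Ioc 0 b) := by
  have hsin : ∀ x ∈ Ioc 0 b, 0 < sin ((n + 1) * x) := fun x hx =>
    sin_pos_of_pos_of_lt_pi (by have := hx.1; positivity) (by nlinarith [hx.2])
  apply strictAntiOn_of_deriv_neg (convex_Ioc 0 b)
  · exact ((by fun_prop : Continuous fun x => sin ((n + 3) * x)).continuousOn).div
      (by fun_prop : Continuous fun x => sin ((n + 1) * x)).continuousOn fun x hx => (hsin x hx).ne'
  · intro x hx
    rw [interior_Ioc] at hx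
    have hd := (((hasDerivAt_id x).const_mul (n + 3 : ℝ)).sin).div
      (((hasDerivAt_id x).const_mul (n + 1 : ℝ)).sin) (hsin x (Ioo_subset_Ioc_self hx)).ne'
    rw [show deriv (fun x => sin ((n + 3) * x) / sin ((n + 1) * x)) x = _ from hd.deriv]
    refine div_neg_of_neg_of_pos ?_ (pow_pos (hsin x (Ioo_subset_Ioc_self hx)) 2)
    have hN := abs_sin_nat_mul_lt (α := 2 * x) (by linarith [hx.1]) (by linarith [hx.2])
      (N := n + 2) (by omega)
    simp only [id, mul_one]
    linarith [sin_div_sin_deriv_numerator_eq n x, le_abs_self (sin ((n + 2 : ℕ) * (2 * x)))]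

theorem exists_eq_two_mul_mul_cos {q x : ℝ} (hq : 0 < q) (hx0 : 0 ≤ x) (hx : x < 2 * q) :
    ∃ φ, 0 < φ ∧ φ ≤ π / 2 ∧ x = 2 * q * cos φ := by
  have h0 : 0 ≤ x / (2 * q) := by positivity
  have h1 : x / (2 * q) < 1 := (div_lt_one (by positivity)).2 hx
  refine ⟨arccos (x / (2 * q)), arccos_pos.2 h1, arccos_le_pi_div_two.2 h0, ?_⟩
  rw [cos_arccos (by linarith) h1.le]
  field_simp

theorem exists_nat_mul_lt_pi_le {φ : ℝ} (h0 : 0 < φ) (hφ : φ < π) :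
    ∃ n : ℕ, (n + 1) * φ < π ∧ π ≤ (n + 2) * φ := by
  have h2 : 2 ≤ ⌈π / φ⌉₊ := Nat.lt_ceil.2 (by exact_mod_cast (one_lt_div h0).2 hφ)
  obtain ⟨n, hn⟩ := Nat.exists_eq_add_of_le' h2
  have hlt := Nat.ceil_lt_add_one (div_nonneg pi_pos.le h0.le)
  have hle := Nat.le_ceil (π / φ)
  rw [hn] at hlt hle
  push_cast at hlt hle
  exact ⟨n, (lt_div_iff₀ h0).1 (by linarith), (div_le_iff₀ h0).1 hle⟩

theorem exists_one_le_weight (q : ℝ) {n : ℕ} {φ : ℝ} (h0 : 0 < φ) (hφ : φ ≤ π / 2)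
    (hn1 : (n + 1) * φ < π) (hn2 : π ≤ (n + 2) * φ) :
    ∃ c, 1 ≤ c ∧ (c - 1) * sin ((n + 1) * φ) + q ^ 2 * sin ((n + 3) * φ) = 0 := by
  have hpos : 0 < sin ((n + 1) * φ) := sin_pos_of_pos_of_lt_pi (by positivity) hn1
  have hneg : sin ((n + 3) * φ) ≤ 0 := by
    rw [← sin_sub_two_pi]
    apply sin_nonpos_of_nonpos_of_neg_pi_le <;> nlinarith
  refine ⟨1 - q ^ 2 * sin ((n + 3) * φ) / sin ((n + 1) * φ), ?_, ?_⟩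
  · have : q ^ 2 * sin ((n + 3) * φ) / sin ((n + 1) * φ) ≤ 0 :=
      div_nonpos_of_nonpos_of_nonneg (mul_nonpos_of_nonneg_of_nonpos (sq_nonneg q) hneg) hpos.le
    linarith
  · rw [sub_sub_cancel_left, neg_mul, div_mul_cancel₀ _ hpos.ne', neg_add_cancel]

theorem eval_Gpoly_comb_pos_of_two_mul_le {k q c x : ℝ} (hq : q ^ 2 = k - 1) (hq0 : 0 < q)
    (hc : 1 ≤ c) (hx : 2 * q ≤ x) (n : ℕ) :
    0 < (c - 1) * (Gpoly k n).eval x + (Gpoly k (n + 2)).eval x := by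
  have h0 := (pow_pos hq0 n).trans_le (pow_le_eval_Gpoly hq hq0.le hx n)
  have h2 := (pow_pos hq0 (n + 2)).trans_le (pow_le_eval_Gpoly hq hq0.le hx (n + 2))
  nlinarith

theorem eval_Gpoly_comb_cos_mul_sin {k q : ℝ} (hq : q ^ 2 = k - 1) (c ψ : ℝ) (n : ℕ) :
    ((c - 1) * (Gpoly k n).eval (2 * q * cos ψ) + (Gpoly k (n + 2)).eval (2 * q * cos ψ)) * sin ψ
      = q ^ n * ((c - 1) * sin ((n + 1) * ψ) + q ^ 2 * sin ((n + 3) * ψ)) := by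
  have h0 := Gpoly_eval_cos_mul_sin hq ψ n
  have h2 := Gpoly_eval_cos_mul_sin hq ψ (n + 2)
  push_cast at h2
  linear_combination (norm := ring_nf) (c - 1) * h0 + h2

theorem sin_comb_pos_of_lt {q c φ ψ : ℝ} {n : ℕ} (hq : q ≠ 0) (hψ : 0 < ψ) (hψφ : ψ < φ)
    (hφ : φ ≤ π / 2) (hn : (n + 1) * φ < π)
    (hc : (c - 1) * sin ((n + 1) * φ) + q ^ 2 * sin ((n + 3) * φ) = 0) :
    0 < (c - 1) * sin ((n + 1) * ψ) + q ^ 2 * sin ((n + 3) * ψ) := by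
  have hφ0 : 0 < φ := hψ.trans hψφ
  have hsφ : 0 < sin ((n + 1) * φ) := sin_pos_of_pos_of_lt_pi (by positivity) hn
  have hsψ : 0 < sin ((n + 1) * ψ) :=
    sin_pos_of_pos_of_lt_pi (by positivity) (by nlinarith)
  have hratio := strictAntiOn_sin_div_sin n hφ hn ⟨hψ, hψφ.le⟩ ⟨hφ0, le_rfl⟩ hψφ
  have hc' : c - 1 = -(q ^ 2 * sin ((n + 3) * φ)) / sin ((n + 1) * φ) := by
    rw [eq_div_iff hsφ.ne']
    linarith
  have hfactor : (c - 1) * sin ((n + 1) * ψ) + q ^ 2 * sin ((n + 3) * ψ)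
      = q ^ 2 * sin ((n + 1) * ψ) * (sin ((n + 3) * ψ) / sin ((n + 1) * ψ)
        - sin ((n + 3) * φ) / sin ((n + 1) * φ)) := by
    rw [hc']
    field_simp
    ring
  rw [hfactor]
  exact mul_pos (mul_pos (sq_pos_of_ne_zero hq) hsψ) (sub_pos.2 hratio)

theorem isGreatest_Gpoly_comb_zeros {k q c φ : ℝ} {n : ℕ} (hq : q ^ 2 = k - 1) (hq0 : 0 < q)
    (hφ0 : 0 < φ) (hφ : φ ≤ π / 2) (hn : (n + 1) * φ < π) (hc1 : 1 ≤ c)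
    (hc : (c - 1) * sin ((n + 1) * φ) + q ^ 2 * sin ((n + 3) * φ) = 0) :
    IsGreatest {x | (c - 1) * (Gpoly k n).eval x + (Gpoly k (n + 2)).eval x = 0}
      (2 * q * cos φ) := by
  have hφπ : φ < π := by linarith [pi_pos]
  refine ⟨?_, fun x hx => ?_⟩
  · have h := eval_Gpoly_comb_cos_mul_sin hq c φ n
    rw [hc, mul_zero] at h
    exact (mul_eq_zero.1 h).resolve_right (sin_pos_of_pos_of_lt_pi hφ0 hφπ).ne'
  by_contra! hlt
  rcases le_or_gt (2 * q) x with hbig | hsmall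
  · exact (eval_Gpoly_comb_pos_of_two_mul_le hq hq0 hc1 hbig n).ne' hx
  have hθ0 : 0 ≤ 2 * q * cos φ := by
    have := cos_nonneg_of_mem_Icc ⟨by linarith, hφ⟩
    positivity
  obtain ⟨ψ, hψ0, hψ, rfl⟩ := exists_eq_two_mul_mul_cos hq0 (hθ0.trans hlt.le) hsmall
  have hψφ : ψ < φ := by
    by_contra! h
    have := cos_le_cos_of_nonneg_of_le_pi hφ0.le (by linarith) h
    linarith [mul_le_mul_of_nonneg_left this (by positivity : (0 : ℝ) ≤ 2 * q)]
  have h := eval_Gpoly_comb_cos_mul_sin hq c ψ n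
  rw [show _ = (0 : ℝ) from hx, zero_mul] at h
  exact (mul_pos (pow_pos hq0 n) (sin_comb_pos_of_lt hq0.ne' hψ0 hψφ hφ hn hc)).ne h

theorem stmt6_general (k : ℕ) (θ : ℝ) (hθ0 : 0 ≤ θ)
    (hθ : θ < 2 * Real.sqrt ((k : ℝ) - 1)) :
    ∃ (t : ℕ) (c : ℝ), 4 ≤ t ∧ 0 < c ∧
      IsGreatest
        {x : ℝ | (c - 1) * (Gpoly (k : ℝ) (t - 4)).eval x + (Gpoly (k : ℝ) (t - 2)).eval x = 0}
        θ := by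
  set q := √((k : ℝ) - 1)
  have hq0 : 0 < q := by linarith
  have hq : q ^ 2 = k - 1 := sq_sqrt (sqrt_pos.1 hq0).le
  obtain ⟨φ, hφ0, hφ, rfl⟩ := exists_eq_two_mul_mul_cos hq0 hθ0 hθ
  obtain ⟨n, hn1, hn2⟩ := exists_nat_mul_lt_pi_le hφ0 (by linarith [pi_pos])
  obtain ⟨c, hc1, hc⟩ := exists_one_le_weight q hφ0 hφ hn1 hn2
  exact ⟨n + 4, c, by omega, by linarith, isGreatest_Gpoly_comb_zeros hq hq0 hφ0 hφ hn1 hc1 hc⟩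

/-- For every `θ ∈ [0, 2√(k-1))` there are `t ≥ 4` and `c > 0` such that `θ` is the
largest real zero of `(c-1) G_{t-4} + G_{t-2}` (the second largest eigenvalue of `B(k,t,c)`). -/
theorem stmt6 (k : ℕ) (hk : 2 ≤ k) (θ : ℝ) (hθ0 : 0 ≤ θ)
    (hθ : θ < 2 * Real.sqrt ((k : ℝ) - 1)) :
    ∃ (t : ℕ) (c : ℝ), 4 ≤ t ∧ 0 < c ∧
      IsGreatest
        {x : ℝ | (c - 1) * (Gpoly (k : ℝ) (t - 4)).eval x + (Gpoly (k : ℝ) (t - 2)).eval x = 0}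
        θ :=
  stmt6_general k θ hθ0 hθ
end

section
/- Let k ≥ 2 and t ≥ 4 be integers and let θ be a real number with λ^{(t−2)} < θ ≤ μ^{(t−2)}, where λ^{(j)} is the largest real zero of G_j and μ^{(j)} is the largest real zero of F_j. Suppose c₁ and c₂ are real numbers with 0 < c₁ < 1 and c₂ > 0 such that (c₁−1)·G_{t−4}(θ) + G_{t−2}(θ) = 0 and (c₂−1)·G_{t−2}(θ) + G_t(θ) = 0. Then M(k,t,c₁) > M(k,t+2,c₂). -/
open Polynomial Matrix

/-- `M(k,t,c) = 2 (∑_{i=0}^{t-4} (k-1)^i + (k-1)^{t-3}/c + (k-1)^{t-2}/c)`. -/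
noncomputable def Mbound (k t : ℕ) (c : ℝ) : ℝ :=
  2 * ((∑ i ∈ Finset.range (t - 3), ((k : ℝ) - 1) ^ i) +
    ((k : ℝ) - 1) ^ (t - 3) / c + ((k : ℝ) - 1) ^ (t - 2) / c)

lemma F_eval_rec (k x : ℝ) (n : ℕ) :
    (Fpoly k (n+3)).eval x = x * (Fpoly k (n+2)).eval x - (k-1) * (Fpoly k (n+1)).eval x := by
  simp [Fpoly]

lemma G_split (k : ℝ) (n : ℕ) : Gpoly k (n+2) = Fpoly k (n+2) + Gpoly k n := by
  unfold Gpoly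
  have h2 : (n+2)/2 + 1 = (n/2 + 1) + 1 := by omega
  rw [h2, Finset.sum_range_succ']
  rw [add_comm]
  congr 1
  exact Finset.sum_congr rfl fun j hj => by
    have : n + 2 - 2*(j+1) = n - 2*j := by omega
    rw [this]

lemma G_zero (k : ℝ) : Gpoly k 0 = 1 := by
  unfold Gpoly; simp; rfl

lemma G_one (k : ℝ) : Gpoly k 1 = X := by
  unfold Gpoly; simp; rfl

lemma F_pos (k x : ℝ) (hk : 2 ≤ k) (hx : k ≤ x) :
    ∀ n, 0 < (Fpoly k n).eval x ∧ (k-1) * (Fpoly k n).eval x ≤ (Fpoly k (n+1)).eval x := by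
  intro n
  induction n with
  | zero => simp [Fpoly]; linarith
  | succ m ih =>
    have hpos : 0 < (Fpoly k (m+1)).eval x := by nlinarith [ih.1, ih.2]
    refine ⟨hpos, ?_⟩
    match m with
    | 0 =>
      simp [Fpoly]
      nlinarith [mul_nonneg (sub_nonneg.2 hx) (by linarith : (0:ℝ) ≤ x + 1)]
    | Nat.succ m' =>
      rw [F_eval_rec]
      nlinarith [ih.2, mul_nonneg (sub_nonneg.2 hx) hpos.le]

lemma G_pos (k x : ℝ) (hk : 2 ≤ k) (hx : k ≤ x) :
    ∀ n, 0 < (Gpoly k n).eval x := by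
  have main : ∀ n, 0 < (Gpoly k n).eval x ∧ 0 < (Gpoly k (n+1)).eval x := by
    intro n
    induction n with
    | zero =>
      rw [G_zero, G_one]; constructor <;> simp <;> linarith
    | succ m ih =>
      refine ⟨ih.2, ?_⟩
      rw [G_split]
      simp only [eval_add]
      have := (F_pos k x hk hx (m+2)).1
      linarith [ih.1]
  exact fun n => (main n).1

lemma F_parity (k x : ℝ) : ∀ n, (Fpoly k n).eval (-x) = (-1)^n * (Fpoly k n).eval x := by
  have main : ∀ n, ((Fpoly k n).eval (-x) = (-1)^n * (Fpoly k n).eval x) ∧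
      ((Fpoly k (n+1)).eval (-x) = (-1)^(n+1) * (Fpoly k (n+1)).eval x) ∧
      ((Fpoly k (n+2)).eval (-x) = (-1)^(n+2) * (Fpoly k (n+2)).eval x) := by
    intro n
    induction n with
    | zero => refine ⟨by simp [Fpoly], by simp [Fpoly], by simp [Fpoly]; try ring⟩
    | succ m ih =>
      refine ⟨ih.2.1, ih.2.2, ?_⟩
      rw [F_eval_rec, F_eval_rec, ih.2.1, ih.2.2]
      ring
  exact fun n => (main n).1

lemma G_parity (k x : ℝ) (n : ℕ) : (Gpoly k n).eval (-x) = (-1)^n * (Gpoly k n).eval x := by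
  unfold Gpoly
  rw [eval_finset_sum, eval_finset_sum, Finset.mul_sum]
  refine Finset.sum_congr rfl fun j hj => ?_
  rw [F_parity]
  have hj' : 2*j ≤ n := by
    simp only [Finset.mem_range] at hj; omega
  have hn : n - 2*j + 2*j = n := by omega
  congr 1
  conv_rhs => rw [← hn]
  rw [pow_add, pow_mul]
  norm_num

lemma G_eval_rec (k x : ℝ) : ∀ n,
    (Gpoly k (n+2)).eval x = x * (Gpoly k (n+1)).eval x - (k-1) * (Gpoly k n).eval x := by
  have main : ∀ n,
      ((Gpoly k (n+2)).eval x = x * (Gpoly k (n+1)).eval x - (k-1) * (Gpoly k n).eval x) ∧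
      ((Gpoly k (n+3)).eval x = x * (Gpoly k (n+2)).eval x - (k-1) * (Gpoly k (n+1)).eval x) := by
    intro n
    induction n with
    | zero =>
      constructor
      · rw [G_split, G_zero, G_one]; simp [Fpoly]; ring
      · rw [show (3:ℕ) = 1 + 2 from rfl, G_split, G_split, G_zero, G_one]
        simp [Fpoly]; ring
    | succ m ih =>
      refine ⟨ih.2, ?_⟩
      rw [show m+1+3 = m+2+2 from rfl, G_split, show m+1+2 = m+3 from rfl,
        G_split (n := m+1), G_split (n := m)]
      simp only [eval_add]
      rw [show m+2+2 = m+1+3 from rfl, F_eval_rec]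
      simp only [show m+1+2=m+3 from rfl, show m+1+1=m+2 from rfl]
      have hsplit : (Gpoly k (m+2)).eval x = (Fpoly k (m+2)).eval x + (Gpoly k m).eval x := by
        rw [G_split]; simp
      linear_combination ih.1 - hsplit
  exact fun n => (main n).1

lemma key_identity (k x : ℝ) : ∀ n,
    (k-1)^2 * (Fpoly k (n+1)).eval x - (Fpoly k (n+3)).eval x
      = (k^2 - x^2) * (Gpoly k (n+1)).eval x := by
  have main : ∀ n,
      ((k-1)^2 * (Fpoly k (n+1)).eval x - (Fpoly k (n+3)).eval x
        = (k^2 - x^2) * (Gpoly k (n+1)).eval x) ∧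
      ((k-1)^2 * (Fpoly k (n+2)).eval x - (Fpoly k (n+4)).eval x
        = (k^2 - x^2) * (Gpoly k (n+2)).eval x) := by
    intro n
    induction n with
    | zero =>
      constructor
      · rw [G_one]; simp [Fpoly]; ring
      · rw [G_split, G_zero]
        simp [Fpoly]; ring
    | succ m ih =>
      refine ⟨ih.2, ?_⟩
      rw [show m+1+2 = m+3 from rfl, show m+1+4 = m+2+3 from rfl, F_eval_rec, F_eval_rec,
        show m+1+2 = m+3 from rfl, show m+3 = m+1+2 from rfl, G_eval_rec]
      simp only [show m+2+2=m+4 from rfl, show m+1+2=m+3 from rfl,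
        show m+1+1=m+2 from rfl]
      linear_combination x * ih.2 - (k-1) * ih.1
  exact fun n => (main n).1

/-- Proposition 4.4: for `λ^{(t-2)} < θ ≤ μ^{(t-2)}`, if `θ` is the second eigenvalue of both
`B(k,t,c₁)` with `0 < c₁ < 1` and `B(k,t+2,c₂)` with `c₂ > 0`, then
`M(k,t,c₁) > M(k,t+2,c₂)`. -/
theorem stmt7 (k t : ℕ) (hk : 2 ≤ k) (ht : 4 ≤ t) (θ lam mu c₁ c₂ : ℝ)
    (hlam : IsGreatest {x : ℝ | (Gpoly (k : ℝ) (t - 2)).eval x = 0} lam)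
    (hmu : IsGreatest {x : ℝ | (Fpoly (k : ℝ) (t - 2)).eval x = 0} mu)
    (hθ1 : lam < θ) (hθ2 : θ ≤ mu)
    (hc1 : 0 < c₁) (hc1' : c₁ < 1) (hc2 : 0 < c₂)
    (h1 : (c₁ - 1) * (Gpoly (k : ℝ) (t - 4)).eval θ + (Gpoly (k : ℝ) (t - 2)).eval θ = 0)
    (h2 : (c₂ - 1) * (Gpoly (k : ℝ) (t - 2)).eval θ + (Gpoly (k : ℝ) t).eval θ = 0) :
    Mbound k t c₁ > Mbound k (t + 2) c₂ := by
  obtain ⟨s, rfl⟩ : ∃ s, t = s + 4 := ⟨t - 4, by omega⟩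
  have e2 : s + 4 - 2 = s + 2 := by omega
  have e4 : s + 4 - 4 = s := by omega
  rw [e2] at hlam h2
  rw [e2, e4] at h1
  have hK : (2:ℝ) ≤ (k:ℝ) := by exact_mod_cast hk
  -- G_{s+2}(θ) > 0
  have hb : 0 < (Gpoly (k:ℝ) (s+2)).eval θ := by
    by_contra hb'
    push_neg at hb'
    have hθN : θ ≤ max θ (k:ℝ) := le_max_left _ _
    have hGN : 0 < (Gpoly (k:ℝ) (s+2)).eval (max θ (k:ℝ)) :=
      G_pos (k:ℝ) _ hK (le_max_right _ _) (s+2)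
    have hcont : ContinuousOn (fun y => (Gpoly (k:ℝ) (s+2)).eval y)
        (Set.Icc θ (max θ (k:ℝ))) := (Polynomial.continuous _).continuousOn
    obtain ⟨c, hc, hc0⟩ := intermediate_value_Icc hθN hcont ⟨hb', hGN.le⟩
    have hmem : c ∈ {x : ℝ | (Gpoly (k:ℝ) (s+2)).eval x = 0} := hc0
    have := hlam.2 hmem
    linarith [hc.1]
  have h1' : (Gpoly (k:ℝ) (s+2)).eval θ = (1 - c₁) * (Gpoly (k:ℝ) s).eval θ := by linarith
  have ha : 0 < (Gpoly (k:ℝ) s).eval θ := by nlinarith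
  have hu : (Fpoly (k:ℝ) (s+2)).eval θ
      = (Gpoly (k:ℝ) (s+2)).eval θ - (Gpoly (k:ℝ) s).eval θ := by
    have := congrArg (eval θ) (G_split (k:ℝ) s)
    simp only [eval_add] at this
    linarith
  have huneg : (Fpoly (k:ℝ) (s+2)).eval θ < 0 := by nlinarith
  have hθk : θ < (k:ℝ) := by
    by_contra hge
    push_neg at hge
    exact absurd (F_pos (k:ℝ) θ hK hge (s+2)).1 (by linarith)
  have hlam0 : 0 ≤ lam := by
    have hl : (Gpoly (k:ℝ) (s+2)).eval lam = 0 := hlam.1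
    have hmem : (-lam) ∈ {x : ℝ | (Gpoly (k:ℝ) (s+2)).eval x = 0} := by
      show (Gpoly (k:ℝ) (s+2)).eval (-lam) = 0
      rw [G_parity, hl, mul_zero]
    linarith [hlam.2 hmem]
  have hθ0 : 0 < θ := lt_of_le_of_lt hlam0 hθ1
  have hkey := key_identity (k:ℝ) θ (s+1)
  simp only [show s+1+1 = s+2 from rfl, show s+1+3 = s+4 from rfl] at hkey
  have hv : (Fpoly (k:ℝ) (s+4)).eval θ
      = (Gpoly (k:ℝ) (s+4)).eval θ - (Gpoly (k:ℝ) (s+2)).eval θ := by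
    have := congrArg (eval θ) (G_split (k:ℝ) (s+2))
    simp only [eval_add, show s+2+2 = s+4 from rfl] at this
    linarith
  have hd : (Gpoly (k:ℝ) (s+4)).eval θ = (1 - c₂) * (Gpoly (k:ℝ) (s+2)).eval θ := by linarith
  have hKθ : 0 < (k:ℝ)^2 - θ^2 := by nlinarith
  have hcomb : (c₂ * (1 - c₁) - ((k:ℝ)-1)^2 * c₁) * (Gpoly (k:ℝ) s).eval θ
      = ((k:ℝ)^2 - θ^2) * (Gpoly (k:ℝ) (s+2)).eval θ := by
    linear_combination hkey - ((k:ℝ)-1)^2 * hu + hv + hd - c₂ * h1' - ((k:ℝ)-1)^2 * h1'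
  have h6 : 0 < (c₂ * (1 - c₁) - ((k:ℝ)-1)^2 * c₁) * (Gpoly (k:ℝ) s).eval θ :=
    hcomb ▸ mul_pos hKθ hb
  have hmain : 0 < c₂ * (1 - c₁) - ((k:ℝ)-1)^2 * c₁ := by nlinarith [h6, ha]
  -- final computation
  have i1 : s + 4 - 3 = s + 1 := by omega
  have i2 : s + 4 - 2 = s + 2 := by omega
  have i3 : s + 4 + 2 - 3 = s + 3 := by omega
  have i4 : s + 4 + 2 - 2 = s + 4 := by omega
  unfold Mbound
  rw [i1, i2, i3, i4]
  have hsum : (∑ i ∈ Finset.range (s+3), ((k:ℝ)-1)^i)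
      = (∑ i ∈ Finset.range (s+1), ((k:ℝ)-1)^i) + ((k:ℝ)-1)^(s+1) + ((k:ℝ)-1)^(s+2) := by
    rw [Finset.sum_range_succ, Finset.sum_range_succ]
  rw [hsum]
  have hr : (0:ℝ) < (k:ℝ) - 1 := by linarith
  have hx : ((k:ℝ)-1)^(s+1)/c₁ + ((k:ℝ)-1)^(s+2)/c₁
      - ((((k:ℝ)-1)^(s+1) + ((k:ℝ)-1)^(s+2)) + (((k:ℝ)-1)^(s+3)/c₂ + ((k:ℝ)-1)^(s+4)/c₂))
      = ((k:ℝ)-1)^(s+1) * (k:ℝ) * ((c₂ * (1 - c₁) - ((k:ℝ)-1)^2 * c₁)/(c₁*c₂)) := by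
    field_simp
    ring
  have hpos : 0 < ((k:ℝ)-1)^(s+1) * (k:ℝ) * ((c₂ * (1 - c₁) - ((k:ℝ)-1)^2 * c₁)/(c₁*c₂)) :=
    mul_pos (mul_pos (pow_pos hr _) (by linarith)) (div_pos hmain (mul_pos hc1 hc2))
  rw [← hx] at hpos
  linarith
end
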